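/- For each t ≥ 0, the minimizer of V(q) = αᵀ(Σ⁻¹ + diag(q))⁻¹α over the simplex {q ∈ ℝ_{≥0}^K : Σ_i q_i = t} is unique, where Σ is a K×K symmetric positive-definite matrix and α ∈ ℝ^K with all α_i > 0. -/

import Mathlib

/-!
Write `A = Σ⁻¹` and `x = (A + diag q)⁻¹ α`. Then `αᵀ(A + diag q)⁻¹α = max_z (2 zᵀα - zᵀ(A + diag q)z)`,
attained exactly at `z = x`. As a maximum of affine functions of `q` the objective is convex, so
the midpoint of two minimizers `q ≠ r` is again a minimizer, and the equality case forces both to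
share the same `x`. Then `(qⱼ - rⱼ) xⱼ = 0`, so `xⱼ = 0` at some `j` with `qⱼ > rⱼ ≥ 0`. The
partial derivatives of the objective are `-xᵢ²`, so minimality forces `xₖ² ≤ xⱼ² = 0` for every
`k` (move mass from `j` to `k`); hence `x = 0` and `α = 0`. Existence is compactness.
-/

open Matrix Filter Topology

variable {ι R : Type*}

namespace Matrix

lemma PosDef.isSymm {B : Matrix ι ι ℝ} (hB : B.PosDef) : B.IsSymm :=
  isHermitian_iff_isSymm.mp hB.1

lemma PosDef.add_diagonal [DecidableEq ι] {A : Matrix ι ι ℝ} (hA : A.PosDef) {q : ι → ℝ}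
    (hq : ∀ i, 0 ≤ q i) : (A + diagonal q).PosDef :=
  hA.add_posSemidef (posSemidef_diagonal_iff.mpr hq)

variable [Fintype ι]

lemma IsSymm.dotProduct_mulVec_comm [CommSemiring R] {B : Matrix ι ι R} (hB : B.IsSymm)
    (x y : ι → R) : x ⬝ᵥ (B *ᵥ y) = y ⬝ᵥ (B *ᵥ x) := by
  rw [dotProduct_mulVec, ← mulVec_transpose, hB.eq, dotProduct_comm]

variable [DecidableEq ι]

lemma mulVec_inv_mulVec [CommRing R] {B : Matrix ι ι R} (hB : IsUnit B.det) (v : ι → R) :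
    B *ᵥ (B⁻¹ *ᵥ v) = v := by
  rw [mulVec_mulVec, mul_nonsing_inv _ hB, one_mulVec]

lemma IsSymm.dotProduct_inv_mulVec_eq [CommRing R] {B : Matrix ι ι R} (hB : B.IsSymm)
    (hdet : IsUnit B.det) (v z : ι → R) :
    v ⬝ᵥ (B⁻¹ *ᵥ v) = 2 * (z ⬝ᵥ v) - z ⬝ᵥ (B *ᵥ z) +
      (z - B⁻¹ *ᵥ v) ⬝ᵥ (B *ᵥ (z - B⁻¹ *ᵥ v)) := by
  have hzv : B⁻¹ *ᵥ v ⬝ᵥ (B *ᵥ z) = z ⬝ᵥ v := by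
    rw [hB.dotProduct_mulVec_comm, mulVec_inv_mulVec hdet]
  rw [mulVec_sub, mulVec_inv_mulVec hdet, sub_dotProduct, dotProduct_sub, dotProduct_sub, hzv,
    dotProduct_comm v]
  ring

lemma IsSymm.dotProduct_inv_mulVec_eq_sub_add [CommRing R] {B C : Matrix ι ι R}
    (hB : IsUnit B.det) (hC : C.IsSymm) (hCdet : IsUnit C.det) (v : ι → R) :
    v ⬝ᵥ (C⁻¹ *ᵥ v) = v ⬝ᵥ (B⁻¹ *ᵥ v) - (B⁻¹ *ᵥ v) ⬝ᵥ ((C - B) *ᵥ (B⁻¹ *ᵥ v)) +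
      ((C - B) *ᵥ (B⁻¹ *ᵥ v)) ⬝ᵥ (C⁻¹ *ᵥ ((C - B) *ᵥ (B⁻¹ *ᵥ v))) := by
  set x := B⁻¹ *ᵥ v
  set w := (C - B) *ᵥ x
  have hBx : B *ᵥ x = v := mulVec_inv_mulVec hB v
  have hCx : C *ᵥ x = v + w := by
    rw [show w = C *ᵥ x - B *ᵥ x from sub_mulVec .., hBx, add_sub_cancel]
  have hw : x - C⁻¹ *ᵥ v = C⁻¹ *ᵥ w := by
    rw [← add_sub_cancel_left v w, ← hCx, mulVec_sub, mulVec_mulVec, nonsing_inv_mul _ hCdet,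
      one_mulVec]
  rw [hC.dotProduct_inv_mulVec_eq hCdet v x, hw, mulVec_inv_mulVec hCdet, dotProduct_comm _ w,
    hCx, dotProduct_add, dotProduct_comm v x]
  ring

namespace PosDef

lemma isUnit_det {B : Matrix ι ι ℝ} (hB : B.PosDef) : IsUnit B.det :=
  (isUnit_iff_isUnit_det B).mp hB.isUnit

lemma le_dotProduct_inv_mulVec {B : Matrix ι ι ℝ} (hB : B.PosDef) (v z : ι → ℝ) :
    2 * (z ⬝ᵥ v) - z ⬝ᵥ (B *ᵥ z) ≤ v ⬝ᵥ (B⁻¹ *ᵥ v) := by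
  rw [hB.isSymm.dotProduct_inv_mulVec_eq hB.isUnit_det v z, le_add_iff_nonneg_right]
  simpa using hB.posSemidef.dotProduct_mulVec_nonneg (z - B⁻¹ *ᵥ v)

lemma eq_inv_mulVec_of_dotProduct_inv_mulVec_le {B : Matrix ι ι ℝ} (hB : B.PosDef)
    {v z : ι → ℝ} (h : v ⬝ᵥ (B⁻¹ *ᵥ v) ≤ 2 * (z ⬝ᵥ v) - z ⬝ᵥ (B *ᵥ z)) : z = B⁻¹ *ᵥ v := by
  rw [hB.isSymm.dotProduct_inv_mulVec_eq hB.isUnit_det v z, add_le_iff_nonpos_right] at h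
  by_contra hne
  have := hB.dotProduct_mulVec_pos (sub_ne_zero.mpr hne)
  simp only [star_trivial] at this
  linarith

lemma dotProduct_inv_mulVec_le_of_posSemidef_sub {A B : Matrix ι ι ℝ} (hA : A.PosDef)
    (hBA : (B - A).PosSemidef) (v : ι → ℝ) : v ⬝ᵥ (B⁻¹ *ᵥ v) ≤ v ⬝ᵥ (A⁻¹ *ᵥ v) := by
  have hB : B.PosDef := by simpa using hA.add_posSemidef hBA
  set w := B⁻¹ *ᵥ v
  have hBw : B *ᵥ w = v := mulVec_inv_mulVec hB.isUnit_det v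
  have hAB : w ⬝ᵥ (A *ᵥ w) ≤ w ⬝ᵥ (B *ᵥ w) := by
    have := hBA.dotProduct_mulVec_nonneg w
    rw [star_trivial, sub_mulVec, dotProduct_sub] at this
    linarith
  calc v ⬝ᵥ w = 2 * (w ⬝ᵥ v) - w ⬝ᵥ (B *ᵥ w) := by rw [hBw, dotProduct_comm]; ring
    _ ≤ 2 * (w ⬝ᵥ v) - w ⬝ᵥ (A *ᵥ w) := by linarith
    _ ≤ v ⬝ᵥ (A⁻¹ *ᵥ v) := hA.le_dotProduct_inv_mulVec v w

/-- Equality case of the convexity of `B ↦ vᵀ B⁻¹ v`. -/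
lemma inv_mulVec_eq_of_le_midpoint {B C M : Matrix ι ι ℝ} (hB : B.PosDef) (hC : C.PosDef)
    (hM : M.PosDef) (hBCM : B + C = (2 : ℝ) • M) {v : ι → ℝ}
    (hBM : v ⬝ᵥ (B⁻¹ *ᵥ v) ≤ v ⬝ᵥ (M⁻¹ *ᵥ v)) (hCM : v ⬝ᵥ (C⁻¹ *ᵥ v) ≤ v ⬝ᵥ (M⁻¹ *ᵥ v)) :
    B⁻¹ *ᵥ v = C⁻¹ *ᵥ v := by
  set z := M⁻¹ *ᵥ v
  have hMz : v ⬝ᵥ z = 2 * (z ⬝ᵥ v) - z ⬝ᵥ (M *ᵥ z) := by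
    simpa [z] using hM.isSymm.dotProduct_inv_mulVec_eq hM.isUnit_det v z
  have hsum : z ⬝ᵥ (B *ᵥ z) + z ⬝ᵥ (C *ᵥ z) = 2 * (z ⬝ᵥ (M *ᵥ z)) := by
    rw [← dotProduct_add, ← add_mulVec, hBCM, smul_mulVec, dotProduct_smul, smul_eq_mul]
  have hBz := hB.le_dotProduct_inv_mulVec v z
  have hCz := hC.le_dotProduct_inv_mulVec v z
  have hzB : z = B⁻¹ *ᵥ v := hB.eq_inv_mulVec_of_dotProduct_inv_mulVec_le (by linarith)
  have hzC : z = C⁻¹ *ᵥ v := hC.eq_inv_mulVec_of_dotProduct_inv_mulVec_le (by linarith)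
  rw [← hzB, ← hzC]

lemma dotProduct_inv_mulVec_le_sub_add {A B C : Matrix ι ι ℝ} (hA : A.PosDef) (hB : B.PosDef)
    (hCA : (C - A).PosSemidef) (v : ι → ℝ) :
    v ⬝ᵥ (C⁻¹ *ᵥ v) ≤ v ⬝ᵥ (B⁻¹ *ᵥ v) - (B⁻¹ *ᵥ v) ⬝ᵥ ((C - B) *ᵥ (B⁻¹ *ᵥ v)) +
      ((C - B) *ᵥ (B⁻¹ *ᵥ v)) ⬝ᵥ (A⁻¹ *ᵥ ((C - B) *ᵥ (B⁻¹ *ᵥ v))) := by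
  have hC : C.PosDef := by simpa using hA.add_posSemidef hCA
  rw [hC.isSymm.dotProduct_inv_mulVec_eq_sub_add hB.isUnit_det hC.isUnit_det]
  gcongr
  exact hA.dotProduct_inv_mulVec_le_of_posSemidef_sub hCA _

end PosDef

end Matrix

variable [Fintype ι]

variable (ι) in
def simplex (t : ℝ) : Set (ι → ℝ) := {p | (∀ i, 0 ≤ p i) ∧ ∑ i, p i = t}

lemma isCompact_simplex (t : ℝ) : IsCompact (simplex ι t) := by
  refine (isCompact_Icc (a := 0) (b := fun _ => t)).of_isClosed_subset ?_ fun p hp => ?_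
  · have : simplex ι t = (⋂ i, {p | 0 ≤ p i}) ∩ {p | ∑ i, p i = t} := by
      ext p; simp [simplex]
    rw [this]
    exact (isClosed_iInter fun i => isClosed_le continuous_const (continuous_apply i)).inter
      (isClosed_eq (by fun_prop) continuous_const)
  · exact ⟨hp.1, fun i => hp.2 ▸ Finset.single_le_sum (fun j _ => hp.1 j) (Finset.mem_univ i)⟩

lemma simplex_nonempty [Nonempty ι] {t : ℝ} (ht : 0 ≤ t) : (simplex ι t).Nonempty := by
  classical
  obtain ⟨i⟩ := ‹Nonempty ι›
  exact ⟨Pi.single i t, fun j => by by_cases h : j = i <;> simp [h, ht], by simp⟩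

lemma convex_simplex (t : ℝ) : Convex ℝ (simplex ι t) := by
  intro p hp q hq a b ha hb hab
  refine ⟨fun i => ?_, ?_⟩
  · simpa using add_nonneg (mul_nonneg ha (hp.1 i)) (mul_nonneg hb (hq.1 i))
  · simp [Finset.sum_add_distrib, ← Finset.mul_sum, hp.2, hq.2, ← add_mul, hab]

variable [DecidableEq ι]

/-- The objective `V`, as a function of `A = Σ⁻¹`. -/
noncomputable def invQuadForm (A : Matrix ι ι ℝ) (α q : ι → ℝ) : ℝ :=
  α ⬝ᵥ ((A + diagonal q)⁻¹ *ᵥ α)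

lemma continuousOn_invQuadForm {A : Matrix ι ι ℝ} (hA : A.PosDef) (α : ι → ℝ) :
    ContinuousOn (invQuadForm A α) {q | ∀ i, 0 ≤ q i} := by
  intro q hq
  have hdet : (A + diagonal q).det ≠ 0 := (hA.add_diagonal hq).isUnit_det.ne_zero
  have hinv : ContinuousAt (fun p : ι → ℝ => (A + diagonal p)⁻¹) q := by
    refine (continuousAt_matrix_inv _ ?_).comp (by fun_prop)
    simpa [Ring.inverse_eq_inv'] using continuousAt_inv₀ hdet
  have hquad : Continuous fun M : Matrix ι ι ℝ => α ⬝ᵥ (M *ᵥ α) :=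
    continuous_const.dotProduct (continuous_id.matrix_mulVec continuous_const)
  exact (hquad.continuousAt.comp hinv).continuousWithinAt

/-- First-order optimality: the partial derivatives of the objective are `-xᵢ²`. -/
lemma sq_inv_mulVec_le_of_isMinOn {A : Matrix ι ι ℝ} (hA : A.PosDef) {α q : ι → ℝ} {t : ℝ}
    (hq : q ∈ simplex ι t) (hmin : IsMinOn (invQuadForm A α) (simplex ι t) q) {j : ι}
    (hj : 0 < q j) (k : ι) :
    ((A + diagonal q)⁻¹ *ᵥ α) k ^ 2 ≤ ((A + diagonal q)⁻¹ *ᵥ α) j ^ 2 := by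
  set x := (A + diagonal q)⁻¹ *ᵥ α with hx
  set d : ι → ℝ := Pi.single k 1 - Pi.single j 1
  set u := diagonal d *ᵥ x
  set c := u ⬝ᵥ (A⁻¹ *ᵥ u)
  have hxu : x ⬝ᵥ u = x k ^ 2 - x j ^ 2 := by
    simp [u, d, mulVec_diagonal, dotProduct, Pi.single_apply, sub_mul, mul_sub,
      Finset.sum_sub_distrib]
    ring
  have hstep : ∀ ε ∈ Set.Ioc 0 (q j), x k ^ 2 - x j ^ 2 ≤ ε * c := by
    rintro ε ⟨hε, hεq⟩
    have hmem : q + ε • d ∈ simplex ι t := by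
      refine ⟨fun i => ?_, ?_⟩
      · have := hq.1 i
        simp only [d, Pi.add_apply, Pi.smul_apply, Pi.sub_apply, Pi.single_apply, smul_eq_mul]
        split_ifs <;> subst_vars <;> linarith
      · simp [d, Finset.sum_add_distrib, ← Finset.mul_sum, hq.2]
    have hbound := hA.dotProduct_inv_mulVec_le_sub_add (hA.add_diagonal hq.1)
      (C := A + diagonal (q + ε • d)) (by simpa using posSemidef_diagonal_iff.mpr hmem.1) α
    have hCB : (A + diagonal (q + ε • d) - (A + diagonal q)) *ᵥ x = ε • u := by
      ext i
      simp [u, add_sub_add_left_eq_sub, mulVec_diagonal, mul_assoc]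
    rw [← hx, hCB, mulVec_smul, dotProduct_smul, smul_dotProduct, dotProduct_smul, hxu] at hbound
    have hle : invQuadForm A α q ≤ invQuadForm A α (q + ε • d) := hmin hmem
    simp only [invQuadForm, smul_eq_mul] at hle hbound
    have : ε * (x k ^ 2 - x j ^ 2) ≤ ε * (ε * c) := by linarith
    exact le_of_mul_le_mul_left this hε
  have hlim : Tendsto (fun ε : ℝ => ε * c) (𝓝[>] 0) (𝓝 0) := by
    have : Tendsto (fun ε : ℝ => ε * c) (𝓝 0) (𝓝 (0 * c)) :=
      (continuous_id.mul continuous_const).tendsto 0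
    simpa using this.mono_left nhdsWithin_le_nhds
  have := ge_of_tendsto hlim (mem_of_superset (Ioc_mem_nhdsGT hj) hstep)
  linarith

lemma eq_of_isMinOn_invQuadForm {A : Matrix ι ι ℝ} (hA : A.PosDef) {α : ι → ℝ} (hα : α ≠ 0) {t : ℝ}
    {q r : ι → ℝ} (hq : q ∈ simplex ι t) (hr : r ∈ simplex ι t)
    (hqmin : IsMinOn (invQuadForm A α) (simplex ι t) q)
    (hrmin : IsMinOn (invQuadForm A α) (simplex ι t) r) : q = r := by
  have hB := hA.add_diagonal hq.1
  have hC := hA.add_diagonal hr.1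
  set x := (A + diagonal q)⁻¹ *ᵥ α with hx
  have hm : (1 / 2 : ℝ) • q + (1 / 2 : ℝ) • r ∈ simplex ι t :=
    convex_simplex t hq hr (by norm_num) (by norm_num) (by norm_num)
  have hxr : x = (A + diagonal r)⁻¹ *ᵥ α := by
    refine hB.inv_mulVec_eq_of_le_midpoint hC (hA.add_diagonal hm.1) ?_ (hqmin hm) (hrmin hm)
    ext i i'
    by_cases h : i = i' <;> simp [h, diagonal] <;> ring
  have hdiag : ∀ i, (q i - r i) * x i = 0 := by
    have hBx : (A + diagonal q) *ᵥ x = α := mulVec_inv_mulVec hB.isUnit_det α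
    have hCx : (A + diagonal r) *ᵥ x = α := hxr ▸ mulVec_inv_mulVec hC.isUnit_det α
    have h : (A + diagonal q - (A + diagonal r)) *ᵥ x = 0 := by
      rw [sub_mulVec, hBx, hCx, sub_self]
    rw [add_sub_add_left_eq_sub, diagonal_sub] at h
    exact fun i => by simpa [mulVec_diagonal] using congrFun h i
  by_contra hne
  obtain ⟨j, hj⟩ : ∃ j, r j < q j := by
    by_contra! h
    exact hne (funext fun i => (Finset.sum_eq_sum_iff_of_le fun i _ => h i).mp
      (hq.2.trans hr.2.symm) i (Finset.mem_univ i))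
  have hxj : x j = 0 := (mul_eq_zero.mp (hdiag j)).resolve_left (sub_ne_zero.mpr hj.ne')
  have hx0 : x = 0 := funext fun k => by
    have := sq_inv_mulVec_le_of_isMinOn hA hq hqmin ((hr.1 j).trans_lt hj) k
    rw [← hx, hxj] at this
    simpa using this
  apply hα
  rw [← mulVec_inv_mulVec hB.isUnit_det α, ← hx, hx0, mulVec_zero]

theorem stmt_11 {K : ℕ} (hK : 1 ≤ K) (S : Matrix (Fin K) (Fin K) ℝ) (hS : S.PosDef)
    (α : Fin K → ℝ) (hα : ∀ i, 0 < α i) (t : ℝ) (ht : 0 ≤ t) :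
    ∃! q : Fin K → ℝ, (∀ i, 0 ≤ q i) ∧ (∑ i, q i = t) ∧
      ∀ r : Fin K → ℝ, (∀ i, 0 ≤ r i) → (∑ i, r i = t) →
        α ⬝ᵥ ((S⁻¹ + diagonal q)⁻¹ *ᵥ α) ≤ α ⬝ᵥ ((S⁻¹ + diagonal r)⁻¹ *ᵥ α) := by
  have : Nonempty (Fin K) := ⟨⟨0, hK⟩⟩
  have hα0 : α ≠ 0 := fun h => (hα ⟨0, hK⟩).ne' (by simp [h])
  obtain ⟨q, hq, hqmin⟩ := (isCompact_simplex t).exists_isMinOn (simplex_nonempty ht)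
    ((continuousOn_invQuadForm hS.inv α).mono fun p hp => hp.1)
  refine ⟨q, ⟨hq.1, hq.2, fun r hr0 hr1 => hqmin ⟨hr0, hr1⟩⟩, fun r ⟨hr0, hr1, hrmin⟩ => ?_⟩
  exact eq_of_isMinOn_invQuadForm hS.inv hα0 ⟨hr0, hr1⟩ hq (fun p hp => hrmin p hp.1 hp.2) hqmin
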